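/- Let k be an even integer with k ≥ 4, let d = (3k+4)/2, and let C be a symmetric (d,k) circuit code of length 4k+6. Then the transition sequence T(C) contains a bit run of length k+3. -/

import Mathlib

/-- The graph of the `d`-dimensional hypercube: vertices are binary vectors of
length `d`, adjacent iff they differ in exactly one coordinate. -/
def hypercube (d : ℕ) : SimpleGraph (Fin d → Bool) where
  Adj x y := hammingDist x y = 1
  symm := by
    constructor
    intro x y h
    rwa [hammingDist_comm]
  loopless := by
    constructor
    intro x h
    simp [hammingDist_self] at h

/-- Distance along a cycle of length `N` between positions `i` and `j`. -/
def cycDist {N : ℕ} (i j : ZMod N) : ℕ := min (i - j).val (j - i).val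

/-- `x : ZMod N → (Fin d → Bool)` is a `(d,k)` circuit code of length `N`:
a cycle in the hypercube `I(d)` satisfying the spread-`k` distance requirement. -/
structure IsCircuitCode (d k N : ℕ) (x : ZMod N → Fin d → Bool) : Prop where
  inj : Function.Injective x
  adj : ∀ i : ZMod N, (hypercube d).Adj (x i) (x (i + 1))
  spread : ∀ i j : ZMod N, min (cycDist i j) k ≤ (hypercube d).dist (x i) (x j)

/-- `τ` is the transition sequence of the cycle `x`: `τ i` is the unique
coordinate in which `x i` and `x (i+1)` differ. -/
def IsTransitionSeq {d N : ℕ} (x : ZMod N → Fin d → Bool) (τ : ZMod N → Fin d) : Prop :=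
  ∀ (i : ZMod N) (j : Fin d), x (i + 1) j ≠ x i j ↔ j = τ i

/-- The segment of `τ` of length `m` starting at position `start` is a bit run:
all of its entries are distinct. -/
def IsBitRun {d N : ℕ} (τ : ZMod N → Fin d) (start : ZMod N) (m : ℕ) : Prop :=
  ∀ a b : Fin m, τ (start + ((a : ℕ) : ZMod N)) = τ (start + ((b : ℕ) : ZMod N)) → a = b

/-- `δ(ω)`: the number of coordinates appearing an odd number of times in the
segment of `τ` of length `m` starting at `start`. -/
def segDelta {d N : ℕ} (τ : ZMod N → Fin d) (start : ZMod N) (m : ℕ) : ℕ :=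
  (Finset.univ.filter fun c : Fin d =>
    Odd (Finset.univ.filter fun t : Fin m => τ (start + ((t : ℕ) : ZMod N)) = c).card).card

/-!
Along a segment of length `m ≤ N / 2` the Hamming distance between the endpoints is the number
of coordinates occurring an odd number of times in the segment, so the spread condition leaves
room for at most `(m - k) / 2` repeated coordinates: no coordinate repeats within distance `k`,
and a segment of length `k + 5` repeats at most two coordinates. If no segment of length `k + 3`
were a bit run, each would contain a repeat at distance `k + 1` or `k + 2` near its start, and
three consecutive such segments force a repeat at distance `k + 1` at every position or at its
successor. The symmetry `τ (i + N / 2) = τ i` turns a repeat at distance `k + 1` into one at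
distance `k + 2` half a period later, and next to a repeat at distance `k + 1` that yields two
equal transitions at distance `1`.
-/

open Finset

lemma hypercube_adj_update {d : ℕ} {u : Fin d → Bool} {j : Fin d} {b : Bool} (h : u j ≠ b) :
    (hypercube d).Adj u (Function.update u j b) := by
  show hammingDist u (Function.update u j b) = 1
  rw [hammingDist, card_eq_one]
  refine ⟨j, eq_singleton_iff_unique_mem.2 ⟨by simpa using h, fun i hi => ?_⟩⟩
  by_contra hij
  simp [Function.update_of_ne hij] at hi

lemma hypercube_exists_walk_length_le {d : ℕ} (u v : Fin d → Bool) :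
    ∃ w : (hypercube d).Walk u v, w.length ≤ hammingDist u v := by
  induction hn : hammingDist u v using Nat.strong_induction_on generalizing u with
  | _ n ih =>
    by_cases huv : u = v
    · subst huv
      exact ⟨.nil, Nat.zero_le _⟩
    obtain ⟨j, hj⟩ := Function.ne_iff.1 huv
    set u' := Function.update u j (v j)
    have hlt : hammingDist u' v < n := by
      rw [← hn]
      refine card_lt_card ⟨fun i hi => ?_, fun hsub => ?_⟩
      · have hij : i ≠ j := by rintro rfl; simp [u'] at hi
        simpa [u', Function.update_of_ne hij] using hi
      · simpa [u'] using hsub (by simpa using hj : j ∈ _)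
    obtain ⟨w, hw⟩ := ih _ hlt u' rfl
    exact ⟨.cons (hypercube_adj_update hj) w, by simp; omega⟩

lemma hypercube_dist_le_hammingDist {d : ℕ} (u v : Fin d → Bool) :
    (hypercube d).dist u v ≤ hammingDist u v := by
  obtain ⟨w, hw⟩ := hypercube_exists_walk_length_le u v
  exact (SimpleGraph.dist_le w).trans hw

lemma cycDist_add_natCast {N m : ℕ} (s : ZMod N) (hm : 2 * m ≤ N) :
    cycDist s (s + m) = m := by
  rcases Nat.eq_zero_or_pos m with rfl | hm0
  · simp [cycDist]
  have : NeZero N := ⟨by omega⟩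
  have hval : (m : ZMod N).val = m := ZMod.val_cast_of_lt (by omega)
  have hne : (m : ZMod N) ≠ 0 := fun h => by rw [h, ZMod.val_zero] at hval; omega
  simp only [cycDist, sub_add_cancel_left, add_sub_cancel_left, ZMod.neg_val, hne, if_false, hval]
  omega

section Segments

variable {d N : ℕ}

def segCount (τ : ZMod N → Fin d) (s : ZMod N) (m : ℕ) (c : Fin d) : ℕ :=
  (univ.filter fun t : Fin m => τ (s + ((t : ℕ) : ZMod N)) = c).card

lemma segDelta_eq (τ : ZMod N → Fin d) (s : ZMod N) (m : ℕ) :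
    segDelta τ s m = (univ.filter fun c => Odd (segCount τ s m c)).card := rfl

lemma segCount_succ (τ : ZMod N → Fin d) (s : ZMod N) (m : ℕ) (c : Fin d) :
    segCount τ s (m + 1) c = segCount τ s m c + if τ (s + m) = c then 1 else 0 := by
  simp only [segCount, card_filter, Fin.sum_univ_castSucc, Fin.val_castSucc, Fin.val_last]

lemma sum_segCount (τ : ZMod N → Fin d) (s : ZMod N) (m : ℕ) :
    ∑ c, segCount τ s m c = m := by
  unfold segCount
  rw [← card_eq_sum_card_fiberwise (fun t _ => mem_univ _), card_univ, Fintype.card_fin]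

lemma two_le_segCount {τ : ZMod N → Fin d} {s : ZMod N} {m i j : ℕ} {c : Fin d}
    (hij : i < j) (hjm : j < m) (hi : τ (s + i) = c) (hj : τ (s + j) = c) :
    2 ≤ segCount τ s m c := by
  refine one_lt_card.2 ⟨⟨i, by omega⟩, ?_, ⟨j, hjm⟩, ?_, fun h => ?_⟩
  · simpa using hi
  · simpa using hj
  · simp [Fin.ext_iff] at h; omega

/-- Each coordinate contributes to the left side at most its number of occurrences. -/
lemma segDelta_add_two_mul_card_le (τ : ZMod N → Fin d) (s : ZMod N) (m : ℕ) :
    segDelta τ s m + 2 * (univ.filter fun c => 2 ≤ segCount τ s m c).card ≤ m := by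
  calc segDelta τ s m + 2 * (univ.filter fun c => 2 ≤ segCount τ s m c).card
      = ∑ c, ((if Odd (segCount τ s m c) then 1 else 0) +
          2 * if 2 ≤ segCount τ s m c then 1 else 0) := by
        rw [segDelta_eq, card_filter, card_filter, mul_sum, ← sum_add_distrib]
    _ ≤ ∑ c, segCount τ s m c := sum_le_sum fun c _ => by
        split_ifs with h1 h2 h2 <;> rw [Nat.odd_iff] at h1 <;> omega
    _ = m := sum_segCount τ s m

end Segments

namespace IsTransitionSeq

variable {d N : ℕ} {x : ZMod N → Fin d → Bool} {τ : ZMod N → Fin d}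

lemma apply_add_eq_iff_even (hτ : IsTransitionSeq x τ) (s : ZMod N) (m : ℕ) (c : Fin d) :
    x (s + m) c = x s c ↔ Even (segCount τ s m c) := by
  induction m with
  | zero => simp [segCount]
  | succ m ih =>
    have hstep := hτ (s + m) c
    rw [Nat.cast_succ, ← add_assoc, segCount_succ]
    by_cases hc : τ (s + m) = c
    · rw [if_pos hc, Nat.even_add_one, ← ih, Bool.eq_not_of_ne (hstep.2 hc.symm), Bool.not_eq]
    · rw [if_neg hc, add_zero, ← ih, not_ne_iff.1 (mt hstep.1 (Ne.symm hc))]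

lemma hammingDist_eq_segDelta (hτ : IsTransitionSeq x τ) (s : ZMod N) (m : ℕ) :
    hammingDist (x s) (x (s + m)) = segDelta τ s m := by
  rw [segDelta_eq, hammingDist]
  congr 1
  ext c
  simp only [mem_filter, mem_univ, true_and, ← Nat.not_even_iff_odd,
    ← hτ.apply_add_eq_iff_even, ne_comm]

end IsTransitionSeq

namespace IsCircuitCode

variable {d k N : ℕ} {x : ZMod N → Fin d → Bool} {τ : ZMod N → Fin d}

lemma min_le_segDelta (hx : IsCircuitCode d k N x) (hτ : IsTransitionSeq x τ) (s : ZMod N)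
    {m : ℕ} (hm : 2 * m ≤ N) : min m k ≤ segDelta τ s m := by
  calc min m k = min (cycDist s (s + m)) k := by rw [cycDist_add_natCast s hm]
    _ ≤ (hypercube d).dist (x s) (x (s + m)) := hx.spread _ _
    _ ≤ hammingDist (x s) (x (s + m)) := hypercube_dist_le_hammingDist _ _
    _ = segDelta τ s m := hτ.hammingDist_eq_segDelta s m

lemma two_mul_card_le (hx : IsCircuitCode d k N x) (hτ : IsTransitionSeq x τ) (s : ZMod N)
    {w : ℕ} (hw : 2 * (k + w) ≤ N) {C : Finset (Fin d)}
    (hC : ∀ c ∈ C, ∃ i j : ℕ, i < j ∧ j < k + w ∧ τ (s + i) = c ∧ τ (s + j) = c) :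
    2 * C.card ≤ w := by
  have hsub : C ⊆ univ.filter fun c => 2 ≤ segCount τ s (k + w) c := fun c hc => by
    obtain ⟨i, j, hij, hj, hi, hj'⟩ := hC c hc
    simpa using two_le_segCount hij hj hi hj'
  have hδ := hx.min_le_segDelta hτ s hw
  have := segDelta_add_two_mul_card_le τ s (k + w)
  have := card_le_card hsub
  omega

lemma transition_ne (hx : IsCircuitCode d k N x) (hτ : IsTransitionSeq x τ)
    (hN : 2 * (k + 1) ≤ N) (s : ZMod N) {g : ℕ} (hg : 0 < g) (hgk : g ≤ k) :
    τ s ≠ τ (s + g) := fun h => by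
  have := hx.two_mul_card_le hτ s hN (C := {τ s})
    (by simpa using ⟨0, g, hg, by omega, by simp, h.symm⟩)
  simp at this

end IsCircuitCode

section WindowArgument

variable {α : Type*} {f : ℕ → α} {k : ℕ}

lemma window_repeat_cases (hloc : ∀ a g, 0 < g → g ≤ k → f a ≠ f (a + g)) {a i j : ℕ}
    (hi : i < k + 3) (hj : j < k + 3) (hij : i ≠ j) (he : f (a + i) = f (a + j)) :
    f a = f (a + (k + 1)) ∨ f (a + 1) = f (a + 1 + (k + 1)) ∨ f a = f (a + (k + 2)) := by
  wlog hlt : i < j generalizing i j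
  · exact this hj hi hij.symm he.symm (by omega)
  have hgap : k + 1 ≤ j - i := by
    by_contra! h
    refine hloc (a + i) (j - i) (by omega) (by omega) ?_
    rwa [add_assoc, Nat.add_sub_cancel' hlt.le]
  obtain ⟨rfl, rfl⟩ | ⟨rfl, rfl⟩ | ⟨rfl, rfl⟩ :
      (i = 0 ∧ j = k + 1) ∨ (i = 1 ∧ j = k + 2) ∨ (i = 0 ∧ j = k + 2) := by omega
  · exact Or.inl he
  · exact Or.inr (Or.inl (by rwa [add_assoc, add_comm 1 (k + 1)]))
  · exact Or.inr (Or.inr he)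

lemma repeat_succ_or_succ_succ (hk : 3 ≤ k) (hloc : ∀ a g, 0 < g → g ≤ k → f a ≠ f (a + g))
    (hwin : ∀ a (C : Finset α),
      (∀ c ∈ C, ∃ i j, i < j ∧ j < k + 5 ∧ f (a + i) = c ∧ f (a + j) = c) → C.card ≤ 2)
    (hrun : ∀ a, ∃ i j, i < k + 3 ∧ j < k + 3 ∧ f (a + i) = f (a + j) ∧ i ≠ j) (a : ℕ) :
    f (a + 1) = f (a + 1 + (k + 1)) ∨ f (a + 2) = f (a + 2 + (k + 1)) := by
  classical
  have hcases : ∀ b, f b = f (b + (k + 1)) ∨ f (b + 1) = f (b + 1 + (k + 1)) ∨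
      f b = f (b + (k + 2)) := fun b => by
    obtain ⟨i, j, hi, hj, he, hij⟩ := hrun b
    exact window_repeat_cases hloc hi hj hij he
  by_contra! h
  obtain ⟨hA1, hA2⟩ := h
  have hrep0 : ∃ i j, i < j ∧ j < k + 5 ∧ f (a + i) = f a ∧ f (a + j) = f a := by
    rcases hcases a with h0 | h0 | h0
    · exact ⟨0, k + 1, by omega, by omega, rfl, h0.symm⟩
    · exact absurd h0 hA1
    · exact ⟨0, k + 2, by omega, by omega, rfl, h0.symm⟩
  have hrep1 : ∃ i j, i < j ∧ j < k + 5 ∧ f (a + i) = f (a + 1) ∧ f (a + j) = f (a + 1) := by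
    rcases hcases (a + 1) with h1 | h1 | h1
    · exact absurd h1 hA1
    · exact absurd h1 (by rwa [add_assoc a 1 1])
    · exact ⟨1, k + 3, by omega, by omega, rfl, by rw [h1]; ring_nf⟩
  obtain ⟨e, he2, he3, hrepe⟩ : ∃ e, 2 ≤ e ∧ e ≤ 3 ∧
      ∃ i j, i < j ∧ j < k + 5 ∧ f (a + i) = f (a + e) ∧ f (a + j) = f (a + e) := by
    rcases hcases (a + 2) with h2 | h2 | h2
    · exact absurd h2 hA2
    · exact ⟨3, by omega, le_rfl, 3, k + 4, by omega, by omega, rfl, by rw [h2]; ring_nf⟩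
    · exact ⟨2, le_rfl, by omega, 2, k + 4, by omega, by omega, rfl, by rw [h2]; ring_nf⟩
  have hcard := hwin a {f a, f (a + 1), f (a + e)} (by simpa using ⟨hrep0, hrep1, hrepe⟩)
  have h01 := hloc a 1 one_pos (by omega)
  have h0e := hloc a e (by omega) (by omega)
  have h1e := hloc (a + 1) (e - 1) (by omega) (by omega)
  rw [add_assoc, Nat.add_sub_cancel' (by omega)] at h1e
  rw [card_insert_of_notMem (by simp [h01, h0e]), card_pair h1e] at hcard
  omega

lemma exists_injective_window (hk : 3 ≤ k) (hloc : ∀ a g, 0 < g → g ≤ k → f a ≠ f (a + g))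
    (hwin : ∀ a (C : Finset α),
      (∀ c ∈ C, ∃ i j, i < j ∧ j < k + 5 ∧ f (a + i) = c ∧ f (a + j) = c) → C.card ≤ 2)
    (hper : ∀ a, f (a + (2 * k + 3)) = f a) :
    ∃ a, ∀ i j, i < k + 3 → j < k + 3 → f (a + i) = f (a + j) → i = j := by
  by_contra! hrun
  have hA := repeat_succ_or_succ_succ hk hloc hwin hrun
  obtain ⟨b, hb, hAb⟩ : ∃ b, 0 < b ∧ f b = f (b + (k + 1)) := by
    rcases hA 0 with h | h
    · exact ⟨1, one_pos, by simpa using h⟩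
    · exact ⟨2, two_pos, by simpa using h⟩
  set c := b + (k + 1)
  have hB : f c = f (c + (k + 2)) := by
    rw [← hAb, show c + (k + 2) = b + (2 * k + 3) by omega, hper]
  rcases hA (c - 1) with h | h
  · rw [show c - 1 + 1 = c by omega] at h
    exact hloc (c + (k + 1)) 1 one_pos (by omega) (by rw [← h, hB]; ring_nf)
  · rw [show c - 1 + 2 = c + 1 by omega] at h
    exact hloc c 1 one_pos (by omega) (by rw [hB, h]; ring_nf)

end WindowArgument

theorem stmt_11_general (k d : ℕ) (hk4 : 4 ≤ k)
    (x : ZMod (4 * k + 6) → Fin d → Bool)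
    (hx : IsCircuitCode d k (4 * k + 6) x)
    (τ : ZMod (4 * k + 6) → Fin d) (hτ : IsTransitionSeq x τ)
    (hsym : ∀ i : ZMod (4 * k + 6), τ (i + ((2 * k + 3 : ℕ) : ZMod (4 * k + 6))) = τ i) :
    ∃ s : ZMod (4 * k + 6), IsBitRun τ s (k + 3) := by
  obtain ⟨a, ha⟩ := exists_injective_window (f := fun n : ℕ => τ n) (k := k) (by omega)
    (fun a g hg hgk => by simpa using hx.transition_ne hτ (by omega) a hg hgk)
    (fun a C hC => by
      have := hx.two_mul_card_le hτ a (w := 5) (by omega) (C := C) (by simpa using hC)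
      omega)
    (fun a => by simpa using hsym a)
  exact ⟨a, fun i j h => Fin.ext (ha i j i.2 j.2 (by simpa using h))⟩

/-- For even `k ≥ 4` and `d = (3k+4)/2`, the transition sequence of any symmetric
`(d,k)` circuit code of length `4k+6` contains a bit run of length `k+3`. -/
theorem stmt_11 (k d : ℕ) (hk : Even k) (hk4 : 4 ≤ k) (hd : 2 * d = 3 * k + 4)
    (x : ZMod (4 * k + 6) → Fin d → Bool)
    (hx : IsCircuitCode d k (4 * k + 6) x)
    (τ : ZMod (4 * k + 6) → Fin d) (hτ : IsTransitionSeq x τ)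
    (hsym : ∀ i : ZMod (4 * k + 6), τ (i + ((2 * k + 3 : ℕ) : ZMod (4 * k + 6))) = τ i) :
    ∃ s : ZMod (4 * k + 6), IsBitRun τ s (k + 3) :=
  stmt_11_general k d hk4 x hx τ hτ hsym
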